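/- arXiv:2107.00633 — 2 statements merged into one kernel-verified Lean document; each statement's English description precedes it below -/
import Mathlib

section
/- With the Khmaladze transformation T defined by (T f)(x) = f(x) - ∫_{-∞}^{x} g(y)ᵀ A(y)⁻¹ (∫_{y}^{∞} g(z) df(z)) dK(y), where A(y) = ∫_{y}^{∞} g(u)g(u)ᵀ dK(u), the function Γ(x) := ∫_{-∞}^{x} g(t) dK(t) ∈ ℝ^d (componentwise) is annihilated: T(Γ_j)(x) = 0 for every x ≤ x₀ and every coordinate j = 1, …, d. -/
open MeasureTheory Matrix

theorem Matrix.dotProduct_nonsing_inv_mulVec_col {n R : Type*} [Fintype n] [DecidableEq n]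
    [CommRing R] {A : Matrix n n R} (hA : IsUnit A) (v : n → R) (j : n) :
    v ⬝ᵥ (A⁻¹ *ᵥ fun i => A i j) = v j := by
  have hcol : (fun i => A i j) = A *ᵥ Pi.single j 1 := by
    ext i
    simp [mulVec_single]
  rw [hcol, mulVec_mulVec, nonsing_inv_mul _ ((isUnit_iff_isUnit_det A).mp hA), one_mulVec,
    dotProduct_single, mul_one]

theorem khmaladze_annihilates_Gamma_general {d : ℕ} (κ : Measure ℝ)
    (g : ℝ → Fin d → ℝ) (x₀ : ℝ)
    (A : ℝ → Matrix (Fin d) (Fin d) ℝ)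
    (hA : ∀ y i j, A y i j = ∫ z in Set.Ioi y, g z i * g z j ∂κ)
    (hAinv : ∀ y ≤ x₀, IsUnit (A y)) :
    ∀ x ≤ x₀, ∀ j : Fin d,
      (∫ t in Set.Iic x, g t j ∂κ) -
        (∫ y in Set.Iic x,
          g y ⬝ᵥ ((A y)⁻¹ *ᵥ fun i => ∫ z in Set.Ioi y, g z i * g z j ∂κ) ∂κ) = 0 := by
  intro x hx j
  have integrand_eq : ∀ y ∈ Set.Iic x,
      g y ⬝ᵥ ((A y)⁻¹ *ᵥ fun i => ∫ z in Set.Ioi y, g z i * g z j ∂κ) = g y j := by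
    intro y hy
    simp only [← hA]
    exact dotProduct_nonsing_inv_mulVec_col (hAinv y (le_trans hy hx)) (g y) j
  rw [setIntegral_congr_fun measurableSet_Iic integrand_eq, sub_self]

/-- The Khmaladze transform annihilates `Γ_j(x) = ∫_{-∞}^x g_j dK`: for `x ≤ x₀`,
`Γ_j(x) - ∫_{-∞}^x g(y)ᵀ A(y)⁻¹ (∫_y^∞ g g_j dK) dK(y) = 0`, where
`A(y) = ∫_y^∞ g gᵀ dK` is invertible for `y ≤ x₀`. -/
theorem khmaladze_annihilates_Gamma {d : ℕ} (κ : Measure ℝ) [IsFiniteMeasure κ]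
    (g : ℝ → Fin d → ℝ) (x₀ : ℝ)
    (hg : ∀ j, Integrable (fun t => g t j) κ)
    (hgg : ∀ i j, Integrable (fun t => g t i * g t j) κ)
    (A : ℝ → Matrix (Fin d) (Fin d) ℝ)
    (hA : ∀ y i j, A y i j = ∫ z in Set.Ioi y, g z i * g z j ∂κ)
    (hAinv : ∀ y ≤ x₀, IsUnit (A y)) :
    ∀ x ≤ x₀, ∀ j : Fin d,
      (∫ t in Set.Iic x, g t j ∂κ) -
        (∫ y in Set.Iic x,
          g y ⬝ᵥ ((A y)⁻¹ *ᵥ fun i => ∫ z in Set.Ioi y, g z i * g z j ∂κ) ∂κ) = 0 :=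
  khmaladze_annihilates_Gamma_general κ g x₀ A hA hAinv
end

section
/- Let (χ_i) be a strictly stationary ergodic real-valued sequence with E|χ₁| < ∞ and (X_i) a strictly stationary ergodic real sequence (jointly stationary ergodic with χ). Suppose the function x ↦ E[|χ₁| 1{X₀ ≤ x}] is continuous. Then sup_{x ∈ ℝ} | n^{-1} Σ_{i=1}^n χ_i 1{X_{i-1} ≤ x} - E[χ₁ 1{X₀ ≤ x}] | → 0 almost surely. -/
/-!
Write `χ = χ⁺ - χ⁻`; it suffices to treat a mark `0 ≤ g ≤ |χ|`. For fixed `ω` the empirical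
function `A_n(x) = n⁻¹ ∑_{i<n} g(Tⁱω) 1{X(Tⁱω) ≤ x}` is monotone in `x` and lies between `0` and
the average of `g`. By Birkhoff's ergodic theorem, almost surely `A_n(x) → G(x) = E[g 1{X ≤ x}]`
simultaneously at every rational `x`, and the average of `g` tends to `E g = G(+∞)`. The
function `G` is monotone, and continuous because its increments are dominated by those of the
continuous `x ↦ E[|χ| 1{X ≤ x}]`; so finitely many rational points bracket every `x` up to `ε`
in `G`, and monotonicity of `A_n` turns pointwise convergence at them into uniform convergence
(Pólya's argument).

Birkhoff's theorem is proved from Garsia's maximal inequality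
`∫_{max_{n ≤ N} S_n g > 0} g ≥ 0`: the set where `limsup S_n f / n > b` is `T`-invariant, hence
null or conull, and if it were conull, Garsia's inequality applied to `g = f - b` would give
`b ≤ ∫ f`.
-/

open MeasureTheory Filter Topology Set

section BirkhoffSum

variable {α : Type*} {T : α → α} {f g : α → ℝ}

lemma birkhoffAverage_mono (h : f ≤ g) (n : ℕ) (x : α) :
    birkhoffAverage ℝ T f n x ≤ birkhoffAverage ℝ T g n x :=
  smul_le_smul_of_nonneg_left (Finset.sum_le_sum fun k _ => h _) (by positivity)

lemma birkhoffAverage_nonneg (h : 0 ≤ f) (n : ℕ) (x : α) : 0 ≤ birkhoffAverage ℝ T f n x :=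
  smul_nonneg (by positivity) (Finset.sum_nonneg fun k _ => h _)

lemma frequently_natCast_mul_add_lt {u : ℕ → ℝ} {q q' c c' : ℝ} (hq : q' < q)
    (h : ∃ᶠ n : ℕ in atTop, (n : ℝ) * q + c < u n) :
    ∃ᶠ n : ℕ in atTop, (n : ℝ) * q' + c' < u n := by
  have hlarge : ∀ᶠ n : ℕ in atTop, (n : ℝ) * q' + c' ≤ (n : ℝ) * q + c := by
    filter_upwards [(tendsto_natCast_atTop_atTop.atTop_mul_const (sub_pos.2 hq)).eventually_ge_atTop
      (c' - c)] with n hn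
    linarith
  exact h.mp (hlarge.mono fun n h₁ h₂ => h₁.trans_lt h₂)

/-- `{x | limsup (birkhoffSum T f n x) / n > b}`; the witness `q` is rational so that the set is
visibly measurable. -/
def birkhoffLimsupGt (T : α → α) (f : α → ℝ) (b : ℝ) : Set α :=
  {x | ∃ q : ℚ, b < q ∧ ∃ᶠ n : ℕ in atTop, (n : ℝ) * q < birkhoffSum T f n x}

/- `birkhoffSum T f (n + 1) x = f x + birkhoffSum T f n (T x)` shifts the index by one and the
level by a constant; both are absorbed by passing to a slightly smaller rational slope. -/
lemma preimage_birkhoffLimsupGt (b : ℝ) :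
    T ⁻¹' birkhoffLimsupGt T f b = birkhoffLimsupGt T f b := by
  ext x
  simp only [birkhoffLimsupGt, mem_preimage]
  constructor
  · rintro ⟨q, hbq, hq⟩
    obtain ⟨r, hbr, hrq⟩ := exists_rat_btwn hbq
    refine ⟨r, hbr, (tendsto_add_atTop_nat 1).frequently_map _ (fun n hn => ?_)
      (frequently_natCast_mul_add_lt (c := 0) (c' := r - f x) hrq (by simpa using hq))⟩
    rw [birkhoffSum_succ']
    push_cast
    linarith
  · rintro ⟨q, hbq, hq⟩
    obtain ⟨r, hbr, hrq⟩ := exists_rat_btwn hbq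
    have hshift : ∃ᶠ n : ℕ in atTop, (n : ℝ) * q + (q - f x) < birkhoffSum T f n (T x) := by
      refine (tendsto_sub_atTop_nat 1).frequently_map _ (fun n hn => ?_) hq
      cases n with
      | zero => simp at hn
      | succ m =>
        rw [birkhoffSum_succ'] at hn
        push_cast at hn
        rw [add_tsub_cancel_right]
        linarith
    exact ⟨r, hbr, by simpa using frequently_natCast_mul_add_lt (c' := 0) hrq hshift⟩

def maxBirkhoffSum (T : α → α) (g : α → ℝ) (N : ℕ) : α → ℝ :=
  (Finset.range (N + 1)).sup' Finset.nonempty_range_add_one fun n => birkhoffSum T g n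

lemma birkhoffSum_le_maxBirkhoffSum {n N : ℕ} (h : n ≤ N) (x : α) :
    birkhoffSum T g n x ≤ maxBirkhoffSum T g N x := by
  rw [maxBirkhoffSum, Finset.sup'_apply]
  exact Finset.le_sup' (fun n => birkhoffSum T g n x) (Finset.mem_range.2 (Nat.lt_succ_of_le h))

lemma maxBirkhoffSum_nonneg (N : ℕ) (x : α) : 0 ≤ maxBirkhoffSum T g N x := by
  simpa using birkhoffSum_le_maxBirkhoffSum (T := T) (g := g) N.zero_le x

lemma exists_birkhoffSum_eq_maxBirkhoffSum (N : ℕ) (x : α) :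
    ∃ n ≤ N, maxBirkhoffSum T g N x = birkhoffSum T g n x := by
  obtain ⟨n, hn, h⟩ :=
    Finset.exists_mem_eq_sup' Finset.nonempty_range_add_one fun n => birkhoffSum T g n x
  exact ⟨n, Nat.lt_succ_iff.1 (Finset.mem_range.1 hn), by rw [maxBirkhoffSum, Finset.sup'_apply, h]⟩

lemma monotone_maxBirkhoffSum (x : α) : Monotone fun N => maxBirkhoffSum T g N x := by
  intro N N' hN
  obtain ⟨n, hn, h⟩ := exists_birkhoffSum_eq_maxBirkhoffSum (T := T) (g := g) N x
  exact h.trans_le (birkhoffSum_le_maxBirkhoffSum (hn.trans hN) x)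

lemma maxBirkhoffSum_le_add_maxBirkhoffSum {N : ℕ} {x : α} (hpos : 0 < maxBirkhoffSum T g N x) :
    maxBirkhoffSum T g N x ≤ g x + maxBirkhoffSum T g N (T x) := by
  obtain ⟨n, hn, h⟩ := exists_birkhoffSum_eq_maxBirkhoffSum (T := T) (g := g) N x
  cases n with
  | zero => simp [h] at hpos
  | succ m =>
    rw [h, birkhoffSum_succ']
    gcongr
    exact birkhoffSum_le_maxBirkhoffSum (by omega) _

lemma sub_maxBirkhoffSum_comp_le_indicator (N : ℕ) (x : α) :
    maxBirkhoffSum T g N x - maxBirkhoffSum T g N (T x) ≤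
      {y | 0 < maxBirkhoffSum T g N y}.indicator g x := by
  by_cases hx : 0 < maxBirkhoffSum T g N x
  · rw [indicator_of_mem (show x ∈ {y | 0 < maxBirkhoffSum T g N y} from hx)]
    linarith [maxBirkhoffSum_le_add_maxBirkhoffSum hx]
  · rw [indicator_of_notMem (show x ∉ {y | 0 < maxBirkhoffSum T g N y} from hx)]
    linarith [maxBirkhoffSum_nonneg (T := T) (g := g) N (T x)]

end BirkhoffSum

section PointwiseErgodic

variable {Ω : Type*} [MeasurableSpace Ω] {μ : Measure Ω} {T : Ω → Ω} {f g : Ω → ℝ}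

lemma measurable_birkhoffSum (hT : Measurable T) (hg : Measurable g) (n : ℕ) :
    Measurable (birkhoffSum T g n) :=
  Finset.measurable_sum _ fun k _ => hg.comp (hT.iterate k)

lemma MeasureTheory.MeasurePreserving.integrable_birkhoffSum (hT : MeasurePreserving T μ μ)
    (hg : Integrable g μ) (n : ℕ) : Integrable (birkhoffSum T g n) μ :=
  integrable_finsetSum _ fun k _ => (hT.iterate k).integrable_comp_of_integrable hg

lemma measurable_maxBirkhoffSum (hT : Measurable T) (hg : Measurable g) (N : ℕ) :
    Measurable (maxBirkhoffSum T g N) :=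
  Finset.sup'_induction _ _ (p := Measurable) (fun _ h₁ _ h₂ => h₁.sup h₂) fun n _ =>
    measurable_birkhoffSum hT hg n

lemma MeasureTheory.MeasurePreserving.integrable_maxBirkhoffSum (hT : MeasurePreserving T μ μ)
    (hg : Integrable g μ) (N : ℕ) : Integrable (maxBirkhoffSum T g N) μ :=
  Finset.sup'_induction _ _ (p := (Integrable · μ)) (fun _ h₁ _ h₂ => h₁.sup h₂) fun n _ =>
    hT.integrable_birkhoffSum hg n

theorem MeasureTheory.MeasurePreserving.setIntegral_maxBirkhoffSum_pos_nonneg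
    (hT : MeasurePreserving T μ μ) (hgm : Measurable g) (hg : Integrable g μ) (N : ℕ) :
    0 ≤ ∫ x in {x | 0 < maxBirkhoffSum T g N x}, g x ∂μ := by
  have hM := hT.integrable_maxBirkhoffSum hg N
  have hMm := measurable_maxBirkhoffSum hT.measurable hgm N
  have hMT : Integrable (fun x => maxBirkhoffSum T g N (T x)) μ :=
    hT.integrable_comp_of_integrable hM
  have hcomp : ∫ x, maxBirkhoffSum T g N (T x) ∂μ = ∫ x, maxBirkhoffSum T g N x ∂μ := by
    rw [← integral_map hT.measurable.aemeasurable hMm.aestronglyMeasurable, hT.map_eq]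
  have hE : MeasurableSet {x | 0 < maxBirkhoffSum T g N x} := measurableSet_lt measurable_const hMm
  rw [← integral_indicator hE]
  calc (0 : ℝ) = ∫ x, (maxBirkhoffSum T g N x - maxBirkhoffSum T g N (T x)) ∂μ := by
        rw [integral_sub hM hMT, hcomp, sub_self]
    _ ≤ _ := integral_mono (hM.sub hMT) (hg.indicator hE) (sub_maxBirkhoffSum_comp_le_indicator N)

theorem MeasureTheory.MeasurePreserving.integral_nonneg_of_ae_exists_birkhoffSum_pos
    (hT : MeasurePreserving T μ μ) (hgm : Measurable g) (hg : Integrable g μ)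
    (h : ∀ᵐ x ∂μ, ∃ n, 0 < birkhoffSum T g n x) : 0 ≤ ∫ x, g x ∂μ := by
  have hE (N : ℕ) : MeasurableSet {x | 0 < maxBirkhoffSum T g N x} :=
    measurableSet_lt measurable_const (measurable_maxBirkhoffSum hT.measurable hgm N)
  have hmono : Monotone fun N => {x | 0 < maxBirkhoffSum T g N x} :=
    fun N N' hN x (hx : 0 < _) => hx.trans_le (monotone_maxBirkhoffSum x hN)
  have hunion : ⋃ N, {x | 0 < maxBirkhoffSum T g N x} =ᵐ[μ] univ := by
    refine ae_eq_univ.2 (measure_mono_null ?_ (ae_iff.1 h))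
    rintro x hx ⟨n, hn⟩
    exact hx <| mem_iUnion.2 ⟨n, hn.trans_le (birkhoffSum_le_maxBirkhoffSum le_rfl x)⟩
  have hlim := tendsto_setIntegral_of_monotone hE hmono hg.integrableOn
  rw [setIntegral_congr_set hunion, setIntegral_univ] at hlim
  exact ge_of_tendsto' hlim fun N => hT.setIntegral_maxBirkhoffSum_pos_nonneg hgm hg N

lemma measurableSet_birkhoffLimsupGt (hT : Measurable T) (hf : Measurable f) (b : ℝ) :
    MeasurableSet (birkhoffLimsupGt T f b) := by
  simp only [birkhoffLimsupGt, frequently_atTop, ofPred_exists, ofPred_and, ofPred_forall]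
  exact .iUnion fun q => (MeasurableSet.const _).inter <| .iInter fun N => .iUnion fun n =>
    (MeasurableSet.const _).inter <|
      measurableSet_lt measurable_const (measurable_birkhoffSum hT hf n)

theorem Ergodic.ae_notMem_birkhoffLimsupGt [IsProbabilityMeasure μ] (hT : Ergodic T μ)
    (hfm : Measurable f) (hf : Integrable f μ) {b : ℝ} (hb : ∫ x, f x ∂μ < b) :
    ∀ᵐ x ∂μ, x ∉ birkhoffLimsupGt T f b := by
  refine (hT.ae_mem_or_ae_notMem (measurableSet_birkhoffLimsupGt hT.measurable hfm b)
    (preimage_birkhoffLimsupGt b)).resolve_left fun hmem => ?_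
  have hpos : 0 ≤ ∫ x, (f x - b) ∂μ := by
    refine hT.toMeasurePreserving.integral_nonneg_of_ae_exists_birkhoffSum_pos (hfm.sub_const b)
      (hf.sub (integrable_const b)) ?_
    filter_upwards [hmem] with x ⟨q, hbq, hq⟩
    obtain ⟨n, hn⟩ := hq.exists
    refine ⟨n, ?_⟩
    have : (n : ℝ) * b ≤ n * q := mul_le_mul_of_nonneg_left hbq.le n.cast_nonneg
    simp only [birkhoffSum, Finset.sum_sub_distrib, Finset.sum_const, Finset.card_range,
      nsmul_eq_mul] at hn ⊢
    linarith
  rw [integral_sub hf (integrable_const b), integral_const, probReal_univ, one_smul] at hpos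
  linarith

theorem Ergodic.ae_eventually_birkhoffAverage_lt [IsProbabilityMeasure μ] (hT : Ergodic T μ)
    (hfm : Measurable f) (hf : Integrable f μ) :
    ∀ᵐ x ∂μ, ∀ a, ∫ y, f y ∂μ < a → ∀ᶠ n in atTop, birkhoffAverage ℝ T f n x < a := by
  have hrat : ∀ᵐ x ∂μ, ∀ b : ℚ, ∫ y, f y ∂μ < b → x ∉ birkhoffLimsupGt T f b := by
    refine ae_all_iff.2 fun b => ?_
    by_cases hb : ∫ y, f y ∂μ < b
    · filter_upwards [hT.ae_notMem_birkhoffLimsupGt hfm hf hb] with x hx _ using hx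
    · exact ae_of_all _ fun x h => absurd h hb
  filter_upwards [hrat] with x hx a ha
  obtain ⟨b, hfb, hba⟩ := exists_rat_btwn ha
  obtain ⟨q, hbq, hqa⟩ := exists_rat_btwn hba
  have hq : ∀ᶠ n in atTop, birkhoffSum T f n x ≤ n * q := by
    have := hx b hfb
    simp only [birkhoffLimsupGt, mem_ofPred_eq, not_exists, not_and, not_frequently, not_lt] at this
    exact this q (by exact_mod_cast hbq)
  filter_upwards [hq, eventually_gt_atTop 0] with n hn hn₀
  have hn₀' : (0 : ℝ) < n := by exact_mod_cast hn₀
  rw [birkhoffAverage, smul_eq_mul, inv_mul_lt_iff₀ hn₀']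
  calc birkhoffSum T f n x ≤ n * q := hn
    _ < n * a := mul_lt_mul_of_pos_left hqa hn₀'

theorem Ergodic.ae_tendsto_birkhoffAverage [IsProbabilityMeasure μ] (hT : Ergodic T μ)
    (hfm : Measurable f) (hf : Integrable f μ) :
    ∀ᵐ x ∂μ, Tendsto (birkhoffAverage ℝ T f · x) atTop (𝓝 (∫ y, f y ∂μ)) := by
  filter_upwards [hT.ae_eventually_birkhoffAverage_lt hfm hf,
    hT.ae_eventually_birkhoffAverage_lt hfm.neg hf.neg] with x hup hlow
  refine tendsto_order.2 ⟨fun a ha => ?_, hup⟩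
  filter_upwards [hlow (-a) (by simpa [integral_neg] using ha)] with n hn
  simp only [birkhoffAverage_neg, Pi.neg_apply] at hn
  linarith

end PointwiseErgodic

section MonotoneApproximation

variable {G : ℝ → ℝ} {l₀ l₁ η : ℝ}

lemma exists_finset_rat_lower_bracket (hG : Monotone G) (hGc : Continuous G)
    (hG₀ : Tendsto G atBot (𝓝 l₀)) (hG₁ : Tendsto G atTop (𝓝 l₁)) (hη : 0 < η) :
    ∃ s : Finset ℚ, ∀ x, (∃ t ∈ s, (t : ℝ) ≤ x ∧ G x ≤ G t + η) ∨ G x ≤ l₀ + η := by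
  obtain ⟨a, ha⟩ := (hG₀.eventually_lt_const (lt_add_of_pos_right l₀ hη)).exists
  obtain ⟨b₀, hb₀⟩ := eventually_atTop.1 (hG₁.eventually_const_lt (sub_lt_self l₁ hη))
  obtain ⟨b, hb⟩ := exists_rat_gt b₀
  have hcover : Icc a b ⊆ ⋃ t : ℚ, {x | (t : ℝ) < x ∧ G x < G t + η} := by
    intro x _
    obtain ⟨u, v, ⟨hux, hxv⟩, huv⟩ := mem_nhds_iff_exists_Ioo_subset.1
      ((hGc.tendsto x).eventually_const_lt (sub_lt_self (G x) hη))
    obtain ⟨t, hut, htx⟩ := exists_rat_btwn hux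
    have hGt : G x - η < G t := huv ⟨hut, htx.trans hxv⟩
    exact mem_iUnion.2 ⟨t, htx, by linarith⟩
  obtain ⟨s, hs⟩ := isCompact_Icc.elim_finite_subcover _
    (fun t : ℚ => (isOpen_lt continuous_const continuous_id).inter (isOpen_lt hGc continuous_const))
    hcover
  refine ⟨insert b s, fun x => ?_⟩
  rcases lt_or_ge x a with hxa | hax
  · exact .inr (((hG hxa.le).trans_lt ha).le)
  rcases le_or_gt x b with hxb | hbx
  · obtain ⟨t, hts, htx, hGt⟩ := mem_iUnion₂.1 (hs ⟨hax, hxb⟩)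
    exact .inl ⟨t, Finset.mem_insert_of_mem hts, htx.le, hGt.le⟩
  · have := hb₀ b hb.le
    exact .inl ⟨b, Finset.mem_insert_self b s, hbx.le, by linarith [hG.ge_of_tendsto hG₁ x]⟩

lemma exists_finset_rat_upper_bracket (hG : Monotone G) (hGc : Continuous G)
    (hG₀ : Tendsto G atBot (𝓝 l₀)) (hG₁ : Tendsto G atTop (𝓝 l₁)) (hη : 0 < η) :
    ∃ s : Finset ℚ, ∀ x, (∃ t ∈ s, x ≤ (t : ℝ) ∧ G t ≤ G x + η) ∨ l₁ ≤ G x + η := by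
  obtain ⟨s, hs⟩ := exists_finset_rat_lower_bracket (G := fun x => -G (-x)) (l₀ := -l₁)
    (fun x y h => neg_le_neg (hG (neg_le_neg h))) (by fun_prop)
    (hG₁.comp tendsto_neg_atBot_atTop).neg (hG₀.comp tendsto_neg_atTop_atBot).neg hη
  refine ⟨s.image Neg.neg, fun x => ?_⟩
  rcases hs (-x) with ⟨t, hts, htx, hGt⟩ | hGx
  · refine .inl ⟨-t, Finset.mem_image_of_mem _ hts, by push_cast; linarith, ?_⟩
    simp only [neg_neg] at hGt
    push_cast
    linarith
  · simp only [neg_neg] at hGx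
    exact .inr (by linarith)

theorem tendstoUniformly_of_monotone_of_tendsto_rat {ι : Type*} {l : Filter ι}
    {A : ι → ℝ → ℝ} {α β : ι → ℝ} (hA : ∀ i, Monotone (A i)) (hG : Monotone G)
    (hGc : Continuous G) (hG₀ : Tendsto G atBot (𝓝 l₀)) (hG₁ : Tendsto G atTop (𝓝 l₁))
    (hα : ∀ i x, α i ≤ A i x) (hβ : ∀ i x, A i x ≤ β i)
    (hα₀ : Tendsto α l (𝓝 l₀)) (hβ₁ : Tendsto β l (𝓝 l₁))
    (hAG : ∀ q : ℚ, Tendsto (fun i => A i q) l (𝓝 (G q))) : TendstoUniformly A G l := by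
  refine Metric.tendstoUniformly_iff.2 fun ε hε => ?_
  obtain ⟨s₀, hs₀⟩ := exists_finset_rat_lower_bracket hG hGc hG₀ hG₁ (half_pos hε)
  obtain ⟨s₁, hs₁⟩ := exists_finset_rat_upper_bracket hG hGc hG₀ hG₁ (half_pos hε)
  have hgrid : ∀ᶠ i in l, ∀ t ∈ s₀ ∪ s₁, |A i t - G t| < ε / 2 :=
    (Finset.eventually_all _).2 fun t _ => by
      simpa only [Real.dist_eq] using Metric.tendsto_nhds.1 (hAG t) _ (half_pos hε)
  filter_upwards [hgrid, hα₀.eventually_const_lt (sub_lt_self l₀ (half_pos hε)),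
    hβ₁.eventually_lt_const (lt_add_of_pos_right l₁ (half_pos hε))] with i hi hαi hβi x
  rw [Real.dist_eq, abs_sub_lt_iff]
  constructor
  · rcases hs₀ x with ⟨t, hts, htx, hGx⟩ | hGx
    · have := abs_lt.1 (hi t (Finset.mem_union_left _ hts))
      linarith [hA i htx]
    · linarith [hα i x]
  · rcases hs₁ x with ⟨t, hts, hxt, hGt⟩ | hGx
    · have := abs_lt.1 (hi t (Finset.mem_union_right _ hts))
      linarith [hA i hxt]
    · linarith [hβ i x]

lemma TendstoUniformly.tendsto_iSup_abs_sub {ι α : Type*} [Nonempty α] {l : Filter ι}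
    {F : ι → α → ℝ} {f : α → ℝ} (h : TendstoUniformly F f l) :
    Tendsto (fun i => ⨆ x, |F i x - f x|) l (𝓝 0) := by
  refine Metric.tendsto_nhds.2 fun ε hε => ?_
  filter_upwards [Metric.tendstoUniformly_iff.1 h (ε / 2) (half_pos hε)] with i hi
  have hle : ⨆ x, |F i x - f x| ≤ ε / 2 :=
    ciSup_le fun x => by rw [abs_sub_comm, ← Real.dist_eq]; exact (hi x).le
  rw [Real.dist_eq, sub_zero, abs_of_nonneg (Real.iSup_nonneg fun x => abs_nonneg _)]
  linarith

lemma Monotone.continuous_of_continuous_add {α : Type*} [TopologicalSpace α] [LinearOrder α]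
    {f h : α → ℝ} (hf : Monotone f) (hh : Monotone h) (hc : Continuous (f + h)) :
    Continuous f := by
  have hdist (x y : α) : dist (f y) (f x) ≤ dist ((f + h) y) ((f + h) x) := by
    wlog hxy : x ≤ y generalizing x y
    · rw [dist_comm, dist_comm ((f + h) y)]
      exact this y x (le_of_not_ge hxy)
    have h₁ := hf hxy
    have h₂ := hh hxy
    rw [Real.dist_eq, Real.dist_eq]
    exact abs_le_abs (by simp only [Pi.add_apply]; linarith) (by simp only [Pi.add_apply]; linarith)
  refine continuous_iff_continuousAt.2 fun x => tendsto_iff_dist_tendsto_zero.2 ?_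
  exact squeeze_zero (fun _ => dist_nonneg) (fun y => hdist x y)
    (tendsto_iff_dist_tendsto_zero.1 (hc.tendsto x))

end MonotoneApproximation

lemma indicator_preimage_Iic_apply {Ω : Type*} {X g : Ω → ℝ} (x : ℝ) (ω : Ω) :
    (X ⁻¹' Iic x).indicator g ω = g ω * (if X ω ≤ x then 1 else 0) := by
  simp only [mul_ite, mul_one, mul_zero]
  rfl

section MarkedDistributionFunction

variable {Ω : Type*} [MeasurableSpace Ω] {μ : Measure Ω} {X g ψ : Ω → ℝ}

lemma monotone_setIntegral_preimage_Iic (hg : 0 ≤ g) (hgi : Integrable g μ) :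
    Monotone fun x => ∫ ω in X ⁻¹' Iic x, g ω ∂μ := fun _ _ hxy =>
  setIntegral_mono_set hgi.integrableOn (ae_of_all _ hg)
    (preimage_mono (Iic_subset_Iic.2 hxy)).eventuallyLE

lemma tendsto_setIntegral_preimage_Iic_atTop (hX : Measurable X) (hgi : Integrable g μ) :
    Tendsto (fun x => ∫ ω in X ⁻¹' Iic x, g ω ∂μ) atTop (𝓝 (∫ ω, g ω ∂μ)) := by
  have h := tendsto_setIntegral_of_monotone (fun x => hX measurableSet_Iic)
    (fun _ _ hxy => preimage_mono (Iic_subset_Iic.2 hxy)) hgi.integrableOn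
  rwa [← preimage_iUnion, iUnion_Iic, preimage_univ, setIntegral_univ] at h

lemma tendsto_setIntegral_preimage_Iic_atBot (hX : Measurable X) (hgi : Integrable g μ) :
    Tendsto (fun x => ∫ ω in X ⁻¹' Iic x, g ω ∂μ) atBot (𝓝 0) := by
  have h := tendsto_integral_filter_of_dominated_convergence (l := atBot) (fun ω => ‖g ω‖)
    (F := fun x => (X ⁻¹' Iic x).indicator g) (f := 0)
    (.of_forall fun x => (hgi.indicator (hX measurableSet_Iic)).aestronglyMeasurable)
    (.of_forall fun x => ae_of_all _ fun ω => norm_indicator_le_norm_self g ω) hgi.norm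
    (ae_of_all _ fun ω => tendsto_const_nhds.congr' <| (eventually_lt_atBot (X ω)).mono
      fun x hx => (indicator_of_notMem (show ω ∉ X ⁻¹' Iic x from not_le.2 hx) g).symm)
  simpa only [integral_indicator (hX measurableSet_Iic), Pi.zero_apply, integral_zero] using h

lemma continuous_setIntegral_preimage_Iic_of_le (hg : 0 ≤ g) (hgψ : g ≤ ψ)
    (hgi : Integrable g μ) (hψ : Integrable ψ μ)
    (hc : Continuous fun x => ∫ ω in X ⁻¹' Iic x, ψ ω ∂μ) :
    Continuous fun x => ∫ ω in X ⁻¹' Iic x, g ω ∂μ := by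
  refine (monotone_setIntegral_preimage_Iic (X := X) hg hgi).continuous_of_continuous_add
    (monotone_setIntegral_preimage_Iic (X := X) (sub_nonneg.2 hgψ) (hψ.sub hgi)) ?_
  convert hc using 2 with x
  simp only [Pi.add_apply, Pi.sub_apply, integral_sub hψ.integrableOn hgi.integrableOn]
  ring

lemma integral_mul_ite_le_eq_setIntegral (hX : Measurable X) (x : ℝ) :
    ∫ ω, g ω * (if X ω ≤ x then 1 else 0) ∂μ = ∫ ω in X ⁻¹' Iic x, g ω ∂μ := by
  simp only [← integral_indicator (hX measurableSet_Iic), indicator_preimage_Iic_apply]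

variable {T : Ω → Ω} {χ : Ω → ℝ}

theorem Ergodic.ae_tendstoUniformly_birkhoffAverage_indicator_of_nonneg [IsProbabilityMeasure μ]
    (hT : Ergodic T μ) (hX : Measurable X) (hgm : Measurable g) (hg : 0 ≤ g)
    (hgi : Integrable g μ) (hc : Continuous fun x => ∫ ω in X ⁻¹' Iic x, g ω ∂μ) :
    ∀ᵐ ω ∂μ, TendstoUniformly (fun n x => birkhoffAverage ℝ T ((X ⁻¹' Iic x).indicator g) n ω)
      (fun x => ∫ ω' in X ⁻¹' Iic x, g ω' ∂μ) atTop := by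
  have hrat : ∀ᵐ ω ∂μ, ∀ q : ℚ, Tendsto
      (fun n => birkhoffAverage ℝ T ((X ⁻¹' Iic (q : ℝ)).indicator g) n ω) atTop
      (𝓝 (∫ ω' in X ⁻¹' Iic (q : ℝ), g ω' ∂μ)) := by
    refine ae_all_iff.2 fun q => ?_
    rw [← integral_indicator (hX measurableSet_Iic)]
    exact hT.ae_tendsto_birkhoffAverage (hgm.indicator (hX measurableSet_Iic))
      (hgi.indicator (hX measurableSet_Iic))
  filter_upwards [hrat, hT.ae_tendsto_birkhoffAverage hgm hgi] with ω hω hω'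
  exact tendstoUniformly_of_monotone_of_tendsto_rat
    (fun n x y hxy => birkhoffAverage_mono
      (indicator_le_indicator_of_subset (preimage_mono (Iic_subset_Iic.2 hxy)) hg) n ω)
    (monotone_setIntegral_preimage_Iic hg hgi) hc (tendsto_setIntegral_preimage_Iic_atBot hX hgi)
    (tendsto_setIntegral_preimage_Iic_atTop hX hgi)
    (fun n x => birkhoffAverage_nonneg (indicator_nonneg fun ω _ => hg ω) n ω)
    (fun n x => birkhoffAverage_mono (indicator_le_self' fun ω _ => hg ω) n ω)
    tendsto_const_nhds hω' hω

theorem Ergodic.ae_tendstoUniformly_birkhoffAverage_indicator [IsProbabilityMeasure μ]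
    (hT : Ergodic T μ) (hX : Measurable X) (hχm : Measurable χ) (hχ : Integrable χ μ)
    (hc : Continuous fun x => ∫ ω in X ⁻¹' Iic x, |χ ω| ∂μ) :
    ∀ᵐ ω ∂μ, TendstoUniformly (fun n x => birkhoffAverage ℝ T ((X ⁻¹' Iic x).indicator χ) n ω)
      (fun x => ∫ ω' in X ⁻¹' Iic x, χ ω' ∂μ) atTop := by
  have hpart (g : Ω → ℝ) (hgm : Measurable g) (hg : 0 ≤ g) (hgχ : g ≤ |χ|) :=
    have hgi : Integrable g μ := hχ.abs.mono' hgm.aestronglyMeasurable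
      (ae_of_all _ fun ω => (Real.norm_of_nonneg (hg ω)).trans_le (hgχ ω))
    hT.ae_tendstoUniformly_birkhoffAverage_indicator_of_nonneg hX hgm hg hgi
      (continuous_setIntegral_preimage_Iic_of_le hg hgχ hgi hχ.abs hc)
  rw [← posPart_sub_negPart χ]
  filter_upwards [hpart χ⁺ hχm.posPart (posPart_nonneg χ)
      (posPart_add_negPart χ ▸ le_add_of_nonneg_right (negPart_nonneg χ)),
    hpart χ⁻ hχm.negPart (negPart_nonneg χ)
      (posPart_add_negPart χ ▸ le_add_of_nonneg_left (posPart_nonneg χ))] with ω hpos hneg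
  convert hpos.sub hneg using 1
  · ext n x
    rw [indicator_sub', birkhoffAverage_sub]
    rfl
  · ext x
    exact integral_sub hχ.pos_part.integrableOn hχ.neg_part.integrableOn

end MarkedDistributionFunction

/-- Marked Glivenko–Cantelli for stationary ergodic sequences: if `(χ_i, X_{i-1}) =
(χ ∘ T^i, X ∘ T^i)` for an ergodic measure-preserving `T`, `E|χ| < ∞`, and
`x ↦ E[|χ| 1{X ≤ x}]` is continuous, then
`sup_x |n⁻¹ Σ χ_i 1{X_{i-1} ≤ x} - E[χ 1{X ≤ x}]| → 0` almost surely. -/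
theorem marked_glivenko_cantelli_ergodic {Ω : Type*} {mΩ : MeasurableSpace Ω}
    (μ : Measure Ω) [IsProbabilityMeasure μ]
    (T : Ω → Ω) (hT : Ergodic T μ) (χ X : Ω → ℝ)
    (hχm : Measurable χ) (hXm : Measurable X) (hχint : Integrable χ μ)
    (hcont : Continuous fun x : ℝ => ∫ ω, |χ ω| * (if X ω ≤ x then 1 else 0) ∂μ) :
    ∀ᵐ ω ∂μ, Tendsto (fun n : ℕ =>
      ⨆ x : ℝ, |(n : ℝ)⁻¹ * ∑ i ∈ Finset.range n,
          χ (T^[i] ω) * (if X (T^[i] ω) ≤ x then 1 else 0)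
        - ∫ ω', χ ω' * (if X ω' ≤ x then 1 else 0) ∂μ|)
      atTop (nhds 0) := by
  simp only [integral_mul_ite_le_eq_setIntegral hXm] at hcont ⊢
  filter_upwards [hT.ae_tendstoUniformly_birkhoffAverage_indicator hXm hχm hχint hcont] with ω hω
  simpa only [birkhoffAverage, birkhoffSum, smul_eq_mul, indicator_preimage_Iic_apply]
    using hω.tendsto_iSup_abs_sub
end
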